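/- Let L(x) = −∫₀ˣ log(2 sin t) dt be the Lobachevsky function. Then the function s(θ) = ((π − 2θ)/(2π)) · (log(cot θ) − log(cot(θ/2))/cos θ) + (1/π)(L(θ) + L(π/2 − θ)) satisfies lim_{θ→0⁺} s(θ) = −(1/2) log 2 and lim_{θ→π/2⁻} s(θ) = 0. -/

import Mathlib

/-!
The Lobachevsky part is harmless: `Lob` is a primitive of the integrable function
`log (2 sin t)`, hence continuous, and it vanishes at `0` and at `π / 2`, the latter because
`∫₀^{π/2} log (sin t) dt = -(π / 2) log 2`.

Near `0`, the half-angle substitution `t = tan (θ / 2)` turns the bracket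
`log (cot θ) - log (cot (θ / 2)) / cos θ` into `log (1 - t²) - log 2 + 2 t² log t / (1 - t²)`,
which is continuous at `t = 0` with value `-log 2`.
Near `π / 2`, with `φ = π / 2 - θ`, the prefactor `φ / π` cancels the pole of `1 / cos θ`,
since `cos θ = φ · sinc φ`, and the logarithmic singularity of `log (cos θ)` is absorbed as
`φ log (cos θ) = -negMulLog (cos θ) / sinc φ`; the result is continuous at `θ = π / 2` with
value `0`.
-/

open Real Filter Topology

noncomputable def Lob (x : ℝ) : ℝ := -∫ t in (0 : ℝ)..x, Real.log (2 * Real.sin t)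

noncomputable def entropyContribution (θ : ℝ) : ℝ :=
  ((π - 2 * θ) / (2 * π)) *
      (Real.log (1 / Real.tan θ) - Real.log (1 / Real.tan (θ / 2)) / Real.cos θ) +
    (1 / π) * (Lob θ + Lob (π / 2 - θ))

open intervalIntegral

lemma intervalIntegrable_log_two_mul_sin (a b : ℝ) :
    IntervalIntegrable (fun t => log (2 * sin t)) MeasureTheory.volume a b :=
  (analyticOnNhd_const.mul analyticOnNhd_sin).meromorphicOn.intervalIntegrable_log

@[fun_prop]
lemma continuous_lob : Continuous Lob :=
  (continuous_primitive intervalIntegrable_log_two_mul_sin 0).neg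

lemma lob_zero : Lob 0 = 0 := by simp [Lob]

lemma lob_pi_div_two : Lob (π / 2) = 0 := by
  have hsplit : ∫ t in (0 : ℝ)..π / 2, log (2 * sin t)
      = ∫ t in (0 : ℝ)..π / 2, (log 2 + log (sin t)) := by
    refine integral_congr_ae (Eventually.of_forall fun t ht => ?_)
    rw [Set.uIoc_of_le (by positivity)] at ht
    exact log_mul two_ne_zero (sin_pos_of_pos_of_lt_pi ht.1 (by linarith [ht.2, pi_pos])).ne'
  have hlog_sin : IntervalIntegrable (fun t => log (sin t)) MeasureTheory.volume 0 (π / 2) :=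
    intervalIntegrable_log_sin
  rw [Lob, hsplit, integral_add intervalIntegrable_const hlog_sin,
    integral_log_sin_zero_pi_div_two, integral_const, smul_eq_mul]
  ring

@[fun_prop]
lemma continuousAt_tan_half {θ : ℝ} (h : cos (θ / 2) ≠ 0) :
    ContinuousAt (fun x => tan (x / 2)) θ :=
  (continuousAt_tan.2 h).comp (f := fun x : ℝ => x / 2) (by fun_prop)

lemma log_cot_sub_log_cot_half_div_cos_eq {θ : ℝ} (hs : sin θ ≠ 0) (hc : cos θ ≠ 0) :
    log (1 / tan θ) - log (1 / tan (θ / 2)) / cos θ =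
      log (1 - tan (θ / 2) ^ 2) - log 2
        - 2 * tan (θ / 2) * negMulLog (tan (θ / 2)) / (1 - tan (θ / 2) ^ 2) := by
  have hc1 : cos θ ≠ -1 := by
    intro h
    apply hs
    nlinarith [sin_sq_add_cos_sq θ]
  have hcos := cos_eq_two_mul_tan_half_div_one_sub_tan_half_sq θ hc1
  have htan := tan_eq_one_sub_tan_half_sq_div_one_add_tan_half_sq θ
  have hsin := sin_eq_two_mul_tan_half_div_one_add_tan_half_sq θ
  set t := tan (θ / 2)
  have h2 : 1 - t ^ 2 ≠ 0 := by
    intro h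
    rw [h, zero_div] at hcos
    exact hc hcos
  have ht : t ≠ 0 := by
    intro h
    rw [h, mul_zero, zero_div] at hsin
    exact hs hsin
  rw [htan, hcos, one_div_div, log_div h2 (by simpa using ht), log_mul two_ne_zero ht,
    one_div, log_inv, negMulLog]
  field_simp
  ring

lemma mul_log_cot_sub_log_cot_half_div_cos_eq {θ : ℝ} (hs : sin θ ≠ 0) (hc : cos θ ≠ 0) :
    (π - 2 * θ) / (2 * π) * (log (1 / tan θ) - log (1 / tan (θ / 2)) / cos θ) =
      (1 / π) * ((log (tan (θ / 2)) - negMulLog (cos θ)) / sinc (π / 2 - θ)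
        - (π / 2 - θ) * log (sin θ)) := by
  have hφ : π / 2 - θ ≠ 0 := by
    intro h
    apply hc
    rw [show θ = π / 2 by linarith, cos_pi_div_two]
  rw [sinc_of_ne_zero hφ, sin_pi_div_two_sub, tan_eq_sin_div_cos, one_div_div,
    log_div hc hs, one_div, log_inv, negMulLog]
  field_simp
  ring

lemma tendsto_log_cot_sub_log_cot_half_div_cos_nhdsGT_zero :
    Tendsto (fun θ => log (1 / tan θ) - log (1 / tan (θ / 2)) / cos θ) (𝓝[>] 0)
      (𝓝 (-log 2)) := by
  have hcont : ContinuousAt (fun θ => log (1 - tan (θ / 2) ^ 2) - log 2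
      - 2 * tan (θ / 2) * negMulLog (tan (θ / 2)) / (1 - tan (θ / 2) ^ 2)) 0 := by
    fun_prop (disch := simp)
  refine (hcont.continuousWithinAt.tendsto.congr' ?_).trans_eq (by simp)
  filter_upwards [Ioo_mem_nhdsGT (by positivity : (0 : ℝ) < π / 2)] with θ hθ
  exact (log_cot_sub_log_cot_half_div_cos_eq
    (sin_pos_of_pos_of_lt_pi hθ.1 (by linarith [hθ.2, pi_pos])).ne'
    (cos_pos_of_mem_Ioo ⟨by linarith [hθ.1, pi_pos], hθ.2⟩).ne').symm

lemma tendsto_mul_log_cot_sub_log_cot_half_div_cos_nhdsLT_pi_div_two :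
    Tendsto (fun θ => (π - 2 * θ) / (2 * π) * (log (1 / tan θ) - log (1 / tan (θ / 2)) / cos θ))
      (𝓝[<] (π / 2)) (𝓝 0) := by
  have hquarter : π / 2 / 2 = π / 4 := by ring
  have hcont : ContinuousAt (fun θ => (1 / π) * ((log (tan (θ / 2)) - negMulLog (cos θ))
      / sinc (π / 2 - θ) - (π / 2 - θ) * log (sin θ))) (π / 2) := by
    fun_prop (disch := simp [hquarter])
  refine (hcont.continuousWithinAt.tendsto.congr' ?_).trans_eq (by simp [hquarter])
  filter_upwards [Ioo_mem_nhdsLT (by positivity : (0 : ℝ) < π / 2)] with θ hθ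
  exact (mul_log_cot_sub_log_cot_half_div_cos_eq
    (sin_pos_of_pos_of_lt_pi hθ.1 (by linarith [hθ.2, pi_pos])).ne'
    (cos_pos_of_mem_Ioo ⟨by linarith [hθ.1, pi_pos], hθ.2⟩).ne').symm

theorem entropy_contribution_limits :
    Tendsto entropyContribution (nhdsWithin 0 (Set.Ioi 0))
      (nhds (-(1 / 2) * Real.log 2)) ∧
    Tendsto entropyContribution (nhdsWithin (π / 2) (Set.Iio (π / 2)))
      (nhds 0) := by
  have hLob : Continuous fun θ => (1 / π) * (Lob θ + Lob (π / 2 - θ)) := by fun_prop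
  have hA : Continuous fun θ : ℝ => (π - 2 * θ) / (2 * π) := by fun_prop
  unfold entropyContribution
  constructor
  · convert (hA.continuousWithinAt.tendsto.mul
      tendsto_log_cot_sub_log_cot_half_div_cos_nhdsGT_zero).add
      hLob.continuousWithinAt.tendsto using 2
    rw [mul_zero, sub_zero, sub_zero, lob_zero, lob_pi_div_two]
    field_simp
    ring
  · convert tendsto_mul_log_cot_sub_log_cot_half_div_cos_nhdsLT_pi_div_two.add
      hLob.continuousWithinAt.tendsto using 2
    rw [sub_self, lob_zero, lob_pi_div_two]
    ring
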